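/- For 1 ≤ k ≤ e-1, λ^k is a balanced element of G(e,e,n): the set of left divisors of λ^k (for ≼) coincides with the set of right divisors of λ^k (for ≼_r). -/

import Mathlib

open Matrix Complex
open scoped Classical

/-- `ζ_e = exp(2πi/e)`. -/
noncomputable def zeta (e : ℕ) : ℂ := Complex.exp (2 * Real.pi * Complex.I / e)

/-- The generator `t_i` of `G(e,e,n)`: the monomial matrix with upper-left `2×2` block
`[[0, ζ_e^{-i}],[ζ_e^i, 0]]` and identity elsewhere. -/
noncomputable def tmat (e n : ℕ) (i : ℤ) : Matrix (Fin n) (Fin n) ℂ :=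
  Matrix.of fun a b =>
    if (a : ℕ) = 0 ∧ (b : ℕ) = 1 then zeta e ^ (-i)
    else if (a : ℕ) = 1 ∧ (b : ℕ) = 0 then zeta e ^ i
    else if a = b ∧ 2 ≤ (a : ℕ) then 1 else 0

/-- The generator `s_j` of `G(e,e,n)`: the permutation matrix of the transposition
exchanging coordinates `j-1` and `j` (1-indexed), i.e. indices `j-2` and `j-1` (0-indexed). -/
def smat (n : ℕ) (j : ℕ) : Matrix (Fin n) (Fin n) ℂ :=
  Matrix.of fun a b =>
    if (a : ℕ) = j - 2 ∧ (b : ℕ) = j - 1 then 1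
    else if (a : ℕ) = j - 1 ∧ (b : ℕ) = j - 2 then 1
    else if a = b ∧ (a : ℕ) ≠ j - 2 ∧ (a : ℕ) ≠ j - 1 then 1 else 0

/-- The generating set `X = {t_0, …, t_{e-1}, s_3, …, s_n}` of `G(e,e,n)`. -/
noncomputable def Xset (e n : ℕ) : Set (Matrix (Fin n) (Fin n) ℂ) :=
  {w | (∃ i : ℕ, i < e ∧ w = tmat e n i) ∨ (∃ j : ℕ, 3 ≤ j ∧ j ≤ n ∧ w = smat n j)}

/-- Membership in `G(e,e,n)`: `w` is monomial, its nonzero entries are `e`-th roots of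
unity, and the product of its nonzero entries is `1`. -/
def IsGeen (e n : ℕ) (w : Matrix (Fin n) (Fin n) ℂ) : Prop :=
  (∀ i, ∃! j, w i j ≠ 0) ∧ (∀ j, ∃! i, w i j ≠ 0) ∧
  (∀ i j, w i j ≠ 0 → w i j ^ e = 1) ∧
  (∏ i, ∏ j, (if w i j ≠ 0 then w i j else 1)) = 1

/-- The length `ℓ(w)` of `w` over the generating set `X` (all generators are
involutions, so positive words suffice). -/
noncomputable def len (e n : ℕ) (w : Matrix (Fin n) (Fin n) ℂ) : ℕ :=
  sInf {r | ∃ l : List (Matrix (Fin n) (Fin n) ℂ),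
    (∀ x ∈ l, x ∈ Xset e n) ∧ l.length = r ∧ l.prod = w}

/-- Left divisibility: `w' ≼ w` iff `w = w' w''` with `w'' ∈ G(e,e,n)` and
`ℓ(w) = ℓ(w') + ℓ(w'')`. -/
noncomputable def ldvd (e n : ℕ) (w' w : Matrix (Fin n) (Fin n) ℂ) : Prop :=
  ∃ w'', IsGeen e n w'' ∧ w = w' * w'' ∧ len e n w = len e n w' + len e n w''

/-- Right divisibility: `w' ≼_r w` iff `w = w'' w'` with `w'' ∈ G(e,e,n)` and
`ℓ(w) = ℓ(w'') + ℓ(w')`. -/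
noncomputable def rdvd (e n : ℕ) (w' w : Matrix (Fin n) (Fin n) ℂ) : Prop :=
  ∃ w'', IsGeen e n w'' ∧ w = w'' * w' ∧ len e n w = len e n w'' + len e n w'

/-- The element `λ = diag(ζ_e^{-(n-1)}, ζ_e, …, ζ_e)`. -/
noncomputable def lam (e n : ℕ) : Matrix (Fin n) (Fin n) ℂ :=
  Matrix.diagonal (fun i => if (i : ℕ) = 0 then zeta e ^ (-(n - 1 : ℤ)) else zeta e)

/-!
Conjugation by `λ` fixes every `s_j` and sends `t_i` to `t_{i+n}`, so it permutes the finite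
generating set `X` and preserves the length `ℓ`. If `λ^k = w w''` with `ℓ(λ^k) = ℓ(w) + ℓ(w'')`,
then `λ^k = (λ^k w'' λ^{-k}) w`, because a one-sided inverse of a square matrix is two-sided; the
conjugate has the length of `w''` and stays in `G(e,e,n)`, since `λ` is diagonal with `e`-th
roots of unity on the diagonal. The converse is the same argument with `λ^{-k}`.
-/

open scoped Pointwise
open ConjAct MulAction

def wordLengths {M : Type*} [Monoid M] (X : Set M) (v : M) : Set ℕ :=
  {r | ∃ l : List M, (∀ x ∈ l, x ∈ X) ∧ l.length = r ∧ l.prod = v}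

section WordLength

variable {G M : Type*} [Group G] [Monoid M] [MulDistribMulAction G M] {X : Set M} {g : G}

lemma wordLengths_subset_smul (hg : g ∈ stabilizer G X) (v : M) :
    wordLengths X v ⊆ wordLengths X (g • v) := by
  rintro _ ⟨l, hl, rfl, rfl⟩
  refine ⟨l.map (g • ·), ?_, List.length_map _, List.smul_prod'.symm⟩
  simp only [List.mem_map]
  rintro _ ⟨x, hx, rfl⟩
  exact mem_stabilizer_iff.mp hg ▸ Set.smul_mem_smul_set (hl x hx)

lemma wordLengths_smul (hg : g ∈ stabilizer G X) (v : M) :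
    wordLengths X (g • v) = wordLengths X v := by
  refine Set.Subset.antisymm ?_ (wordLengths_subset_smul hg v)
  simpa using wordLengths_subset_smul (inv_mem hg) (g • v)

end WordLength

lemma mem_stabilizer_of_mapsTo {G α : Type*} [Group G] [MulAction G α] {X : Set α} {g : G}
    (hX : X.Finite) (h : Set.MapsTo (fun x => g • x) X X) : g ∈ stabilizer G X :=
  mem_stabilizer_iff.mpr <|
    Set.eq_of_subset_of_ncard_le h.image_subset (Set.ncard_smul_set g X).ge hX

section DedekindFinite

variable {M : Type*} [Monoid M] [IsDedekindFiniteMonoid M] {u : Mˣ} {a b : M}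

lemma ConjAct.eq_smul_mul_of_eq_mul (h : (u : M) = a * b) : (u : M) = toConjAct u • b * a := by
  have hba : b * ↑u⁻¹ * a = 1 := mul_eq_one_comm.mp (by rw [← mul_assoc, ← h, Units.mul_inv])
  calc (u : M) = u * (b * ↑u⁻¹ * a) := by rw [hba, mul_one]
    _ = _ := by rw [units_smul_def, ofConjAct_toConjAct]; simp only [mul_assoc]

lemma ConjAct.eq_mul_inv_smul_of_eq_mul (h : (u : M) = b * a) :
    (u : M) = a * ((toConjAct u)⁻¹ • b) := by
  have hab : a * (↑u⁻¹ * b) = 1 := mul_eq_one_comm.mp (by rw [mul_assoc, ← h, Units.inv_mul])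
  calc (u : M) = a * (↑u⁻¹ * b) * u := by rw [hab, one_mul]
    _ = _ := by rw [units_smul_def, ← map_inv, ofConjAct_toConjAct, inv_inv]; simp only [mul_assoc]

end DedekindFinite

lemma Fintype.prod_ite_const_of_existsUnique {ι M : Type*} [Fintype ι] [CommMonoid M]
    {p : ι → Prop} [DecidablePred p] (h : ∃! i, p i) (c : M) :
    ∏ i, (if p i then c else 1) = c := by
  obtain ⟨i, hi, hu⟩ := h
  rw [Finset.prod_eq_single i (fun j _ hj => if_neg fun hj' => hj (hu j hj')) (by simp),
    if_pos hi]

lemma zeta_ne_zero (e : ℕ) : zeta e ≠ 0 := Complex.exp_ne_zero _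

lemma zeta_pow_self (e : ℕ) : zeta e ^ e = 1 := by
  rcases eq_or_ne e 0 with rfl | he
  · exact pow_zero _
  · exact (Complex.isPrimitiveRoot_exp e he).pow_eq_one

lemma zeta_zpow_emod (e : ℕ) (m : ℤ) : zeta e ^ (m % e) = zeta e ^ m := by
  conv_rhs => rw [← Int.emod_add_mul_ediv m e]
  rw [zpow_add₀ (zeta_ne_zero e), _root_.zpow_mul, zpow_natCast, zeta_pow_self, _root_.one_zpow,
    mul_one]

lemma tmat_emod (e n : ℕ) (m : ℤ) : tmat e n (m % e) = tmat e n m := by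
  simp only [tmat, _root_.zpow_neg, zeta_zpow_emod]

lemma lam_mul_tmat (e n : ℕ) (i : ℤ) : lam e n * tmat e n i = tmat e n (i + n) * lam e n := by
  have hz := zeta_ne_zero e
  ext a b
  simp only [lam, diagonal_mul, mul_diagonal, tmat, of_apply]
  split_ifs <;> first
    | omega
    | (simp only [← zpow_add₀ hz, ← zpow_add_one₀ hz, ← zpow_one_add₀ hz]; ring_nf)
    | simp

lemma lam_mul_smat (e n : ℕ) {j : ℕ} (hj : 3 ≤ j) : lam e n * smat n j = smat n j * lam e n := by
  ext a b
  simp only [lam, diagonal_mul, mul_diagonal, smat, of_apply]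
  split_ifs <;> first | omega | simp

lemma Xset_finite (e n : ℕ) : (Xset e n).Finite := by
  have hX : Xset e n = (fun i : ℕ => tmat e n i) '' Set.Iio e ∪ smat n '' Set.Icc 3 n := by
    ext w
    simp [Xset, eq_comm, and_assoc]
  rw [hX]
  exact ((Set.finite_Iio e).image _).union ((Set.finite_Icc 3 n).image _)

noncomputable def lamDiagUnit (e n : ℕ) : (Fin n → ℂ)ˣ where
  val i := if (i : ℕ) = 0 then zeta e ^ (-(n - 1 : ℤ)) else zeta e
  inv i := if (i : ℕ) = 0 then zeta e ^ (n - 1 : ℤ) else (zeta e)⁻¹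
  val_inv := by
    funext i
    simp only [Pi.mul_apply, Pi.one_apply]
    split_ifs
    · rw [← zpow_add₀ (zeta_ne_zero e), neg_add_cancel, zpow_zero]
    · exact mul_inv_cancel₀ (zeta_ne_zero e)
  inv_val := by
    funext i
    simp only [Pi.mul_apply, Pi.one_apply]
    split_ifs
    · rw [← zpow_add₀ (zeta_ne_zero e), add_neg_cancel, zpow_zero]
    · exact inv_mul_cancel₀ (zeta_ne_zero e)

lemma lamDiagUnit_pow_self (e n : ℕ) : lamDiagUnit e n ^ e = 1 := by
  ext i
  simp only [Units.val_pow_eq_pow_val, Pi.pow_apply, Units.val_one, Pi.one_apply, lamDiagUnit]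
  split_ifs
  · rw [← zpow_natCast, ← _root_.zpow_mul, mul_comm, _root_.zpow_mul, zpow_natCast, zeta_pow_self,
      _root_.one_zpow]
  · exact zeta_pow_self e

noncomputable def lamUnit (e n : ℕ) : (Matrix (Fin n) (Fin n) ℂ)ˣ :=
  Units.map (diagonalRingHom (Fin n) ℂ).toMonoidHom (lamDiagUnit e n)

lemma val_lamUnit (e n : ℕ) : (lamUnit e n : Matrix (Fin n) (Fin n) ℂ) = lam e n := rfl

lemma toConjAct_lamUnit_smul_of_mul_eq {e n : ℕ} {x y : Matrix (Fin n) (Fin n) ℂ}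
    (h : lam e n * x = y * lam e n) : toConjAct (lamUnit e n) • x = y := by
  rw [units_smul_def, ofConjAct_toConjAct, val_lamUnit, h, ← val_lamUnit,
    Units.mul_inv_cancel_right]

lemma toConjAct_lamUnit_mem_stabilizer (e n : ℕ) :
    toConjAct (lamUnit e n) ∈ stabilizer (ConjAct (Matrix (Fin n) (Fin n) ℂ)ˣ) (Xset e n) := by
  refine mem_stabilizer_of_mapsTo (Xset_finite e n) ?_
  rintro _ (⟨i, hi, rfl⟩ | ⟨j, hj3, hjn, rfl⟩) <;> dsimp only
  · refine Or.inl ⟨(i + n) % e, Nat.mod_lt _ (by omega), ?_⟩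
    rw [toConjAct_lamUnit_smul_of_mul_eq (lam_mul_tmat e n i), Int.natCast_mod, Nat.cast_add,
      tmat_emod]
  · exact Or.inr ⟨j, hj3, hjn, toConjAct_lamUnit_smul_of_mul_eq (lam_mul_smat e n hj3)⟩

lemma len_smul_of_mem_zpowers {e n : ℕ} {g : ConjAct (Matrix (Fin n) (Fin n) ℂ)ˣ}
    (hg : g ∈ Subgroup.zpowers (toConjAct (lamUnit e n))) (v : Matrix (Fin n) (Fin n) ℂ) :
    len e n (g • v) = len e n v :=
  congrArg sInf <| wordLengths_smul
    (Subgroup.zpowers_le.mpr (toConjAct_lamUnit_mem_stabilizer e n) hg) v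

lemma IsGeen.toConjAct_diagonal_smul {e n : ℕ} {δ : (Fin n → ℂ)ˣ} (hδ : δ ^ e = 1)
    {A : Matrix (Fin n) (Fin n) ℂ} (hA : IsGeen e n A) :
    IsGeen e n (toConjAct (Units.map (diagonalRingHom (Fin n) ℂ).toMonoidHom δ) • A) := by
  obtain ⟨hrow, hcol, hroot, hprod⟩ := hA
  set d : Fin n → ℂ := ↑δ
  set d' : Fin n → ℂ := ↑δ⁻¹
  have hdd' (i : Fin n) : d i * d' i = 1 := congrFun δ.mul_inv i
  have root_of {u : (Fin n → ℂ)ˣ} (hu : u ^ e = 1) (i : Fin n) : (u : Fin n → ℂ) i ^ e = 1 := by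
    rw [← Pi.pow_apply, ← Units.val_pow_eq_pow_val, hu, Units.val_one, Pi.one_apply]
  have hd_root := root_of hδ
  have hd'_root := root_of (show δ⁻¹ ^ e = 1 by rw [inv_pow, hδ, inv_one])
  have hentry (i j : Fin n) :
      (toConjAct (Units.map (diagonalRingHom (Fin n) ℂ).toMonoidHom δ) • A) i j
        = d i * A i j * d' j := by
    rw [units_smul_def, ofConjAct_toConjAct, ← map_inv, Units.coe_map, Units.coe_map]
    simp [d, d', diagonal_mul, mul_diagonal]
  have hne (i j : Fin n) : d i * A i j * d' j ≠ 0 ↔ A i j ≠ 0 := by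
    simp [left_ne_zero_of_mul_eq_one (hdd' i), right_ne_zero_of_mul_eq_one (hdd' j)]
  simp only [IsGeen, hentry, hne]
  refine ⟨hrow, hcol, fun i j h => ?_, ?_⟩
  · rw [mul_pow, mul_pow, hd_root, hroot i j h, hd'_root, one_mul, one_mul]
  · have hrow_d (i : Fin n) : ∏ j, (if A i j ≠ 0 then d i else 1) = d i :=
      Fintype.prod_ite_const_of_existsUnique (hrow i) _
    have hcol_d' : ∏ i, ∏ j, (if A i j ≠ 0 then d' j else 1) = ∏ j, d' j := by
      rw [Finset.prod_comm]
      exact Finset.prod_congr rfl fun j _ => Fintype.prod_ite_const_of_existsUnique (hcol j) _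
    simp only [ite_mul_one, Finset.prod_mul_distrib, hrow_d, hcol_d', hprod, mul_one]
    rw [← Finset.prod_mul_distrib, Finset.prod_congr rfl fun i _ => hdd' i, Finset.prod_const_one]

lemma IsGeen.smul_of_mem_zpowers {e n : ℕ} {g : ConjAct (Matrix (Fin n) (Fin n) ℂ)ˣ}
    (hg : g ∈ Subgroup.zpowers (toConjAct (lamUnit e n))) {A : Matrix (Fin n) (Fin n) ℂ}
    (hA : IsGeen e n A) : IsGeen e n (g • A) := by
  obtain ⟨m, rfl⟩ := Subgroup.mem_zpowers_iff.mp hg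
  rw [← map_zpow, lamUnit, ← map_zpow]
  refine hA.toConjAct_diagonal_smul ?_
  rw [← zpow_natCast, ← _root_.zpow_mul, mul_comm, _root_.zpow_mul, zpow_natCast,
    lamDiagUnit_pow_self, _root_.one_zpow]

theorem statement_13_general (e n : ℕ) (k : ℕ) (w : Matrix (Fin n) (Fin n) ℂ) :
    ldvd e n w (lam e n ^ k) ↔ rdvd e n w (lam e n ^ k) := by
  have hg : toConjAct (lamUnit e n ^ k) ∈ Subgroup.zpowers (toConjAct (lamUnit e n)) := by
    rw [map_pow]
    exact Subgroup.pow_mem _ (Subgroup.mem_zpowers _) k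
  rw [← val_lamUnit, ← Units.val_pow_eq_pow_val]
  constructor
  · rintro ⟨v, hv, hwv, hlen⟩
    refine ⟨_, hv.smul_of_mem_zpowers hg, ConjAct.eq_smul_mul_of_eq_mul hwv, ?_⟩
    rw [len_smul_of_mem_zpowers hg]
    omega
  · rintro ⟨v, hv, hvw, hlen⟩
    refine ⟨_, hv.smul_of_mem_zpowers (inv_mem hg), ConjAct.eq_mul_inv_smul_of_eq_mul hvw, ?_⟩
    rw [len_smul_of_mem_zpowers (inv_mem hg)]
    omega

/-- for `1 ≤ k ≤ e-1`, `λ^k` is balanced: its left divisors coincide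
with its right divisors. -/
theorem statement_13 (e n : ℕ) (hn : 2 ≤ n) (k : ℕ) (hk1 : 1 ≤ k) (hke : k ≤ e - 1)
    (w : Matrix (Fin n) (Fin n) ℂ) (hw : IsGeen e n w) :
    ldvd e n w (lam e n ^ k) ↔ rdvd e n w (lam e n ^ k) :=
  statement_13_general e n k w
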